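/- arXiv:1512.09020 — 5 statements merged into one kernel-verified Lean document; each statement's English description precedes it below -/
import Mathlib

section
/- If R and R₁ are n×p real matrices with R (RᵀR)⁻ Rᵀ = R₁ (R₁ᵀR₁)⁻ R₁ᵀ (Moore–Penrose pseudoinverses), then there exists a nonsingular p×p matrix A such that R₁ = R Aᵀ. -/
/-!
The first Penrose condition for `RᵀR` gives `R G RᵀR = R`, because `RᵀR Y = 0` forces `R Y = 0`.
Hence the common matrix `R G Rᵀ = R₁ G₁ R₁ᵀ` fixes both `R` and `R₁`, so each of them is a right
multiple of the other and they have the same column space. Two linear maps with the same range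
and finite-dimensional domain differ by an automorphism of the domain: both domains split as
range × kernel, and the kernels have equal dimension.
-/

open Matrix

/-- The four Penrose conditions characterizing the Moore–Penrose pseudoinverse. -/
def IsMoorePenrose {m n : Type*} [Fintype m] [Fintype n]
    (A : Matrix m n ℝ) (Ap : Matrix n m ℝ) : Prop :=
  A * Ap * A = A ∧ Ap * A * Ap = Ap ∧ (A * Ap)ᵀ = A * Ap ∧ (Ap * A)ᵀ = Ap * A

open Module

namespace LinearMap

variable {K V W : Type*} [DivisionRing K] [AddCommGroup V] [Module K V] [AddCommGroup W]
  [Module K W]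

theorem exists_linearEquiv_range_prod_ker (f : V →ₗ[K] W) :
    ∃ E : V ≃ₗ[K] range f × ker f, ∀ v, ((E v).1 : W) = f v := by
  obtain ⟨C, hC⟩ := Submodule.exists_isCompl (ker f)
  refine ⟨equivProdOfSurjectiveOfIsCompl f.rangeRestrict ((ker f).projectionOnto C hC)
    f.range_rangeRestrict (Submodule.range_projectionOnto hC) ?_, fun v => rfl⟩
  rwa [ker_rangeRestrict, Submodule.ker_projectionOnto]

theorem exists_linearEquiv_comp_eq_of_range_eq [FiniteDimensional K V] {f g : V →ₗ[K] W}
    (h : range f = range g) : ∃ e : V ≃ₗ[K] V, f = g ∘ₗ e := by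
  obtain ⟨Ef, hEf⟩ := f.exists_linearEquiv_range_prod_ker
  obtain ⟨Eg, hEg⟩ := g.exists_linearEquiv_range_prod_ker
  have hker : finrank K (ker f) = finrank K (ker g) := by
    have hf := f.finrank_range_add_finrank_ker
    have hg := g.finrank_range_add_finrank_ker
    rw [h] at hf
    omega
  refine ⟨Ef ≪≫ₗ (LinearEquiv.ofEq _ _ h).prodCongr (LinearEquiv.ofFinrankEq _ _ hker) ≪≫ₗ
    Eg.symm, ?_⟩
  ext v
  simp [← hEg, hEf]

end LinearMap

namespace Matrix

variable {K m n : Type*} [Fintype n]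

theorem mul_mul_conjTranspose_mul_self_eq_self [Fintype m] [Field K] [PartialOrder K] [StarRing K]
    [StarOrderedRing K] [DecidableEq n] {R : Matrix m n K} {G : Matrix n n K}
    (h : Rᴴ * R * G * (Rᴴ * R) = Rᴴ * R) : R * G * (Rᴴ * R) = R := by
  have hzero : (Rᴴ * R) * (G * (Rᴴ * R) - 1) = 0 := by
    rw [Matrix.mul_sub, ← Matrix.mul_assoc, h, Matrix.mul_one, sub_self]
  rw [conjTranspose_mul_self_mul_eq_zero, Matrix.mul_sub, Matrix.mul_one, sub_eq_zero] at hzero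
  rwa [Matrix.mul_assoc]

theorem range_mulVecLin_mul_le [CommSemiring K] {l : Type*} [Fintype l] (A : Matrix m n K)
    (X : Matrix n l K) :
    LinearMap.range (A * X).mulVecLin ≤ LinearMap.range A.mulVecLin := by
  rw [mulVecLin_mul]
  exact LinearMap.range_comp_le_range _ _

theorem exists_isUnit_det_mul_eq_of_range_mulVecLin_eq [Field K] [DecidableEq n]
    {A B : Matrix m n K} (h : LinearMap.range B.mulVecLin = LinearMap.range A.mulVecLin) :
    ∃ U : Matrix n n K, IsUnit U.det ∧ B = A * U := by
  obtain ⟨e, he⟩ := LinearMap.exists_linearEquiv_comp_eq_of_range_eq h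
  refine ⟨LinearMap.toMatrix' e, by rw [LinearMap.det_toMatrix']; exact e.isUnit_det', ?_⟩
  apply Matrix.toLin'.injective
  rw [Matrix.toLin'_mul, Matrix.toLin'_toMatrix']
  exact he

end Matrix

/-- If `R (RᵀR)⁻ Rᵀ = R₁ (R₁ᵀR₁)⁻ R₁ᵀ` then `R₁ = R Aᵀ` for some nonsingular `A`. -/
theorem stmt1 {n p : ℕ} (R R₁ : Matrix (Fin n) (Fin p) ℝ)
    (G G₁ : Matrix (Fin p) (Fin p) ℝ)
    (hG : IsMoorePenrose (Rᵀ * R) G) (hG₁ : IsMoorePenrose (R₁ᵀ * R₁) G₁)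
    (heq : R * G * Rᵀ = R₁ * G₁ * R₁ᵀ) :
    ∃ A : Matrix (Fin p) (Fin p) ℝ, A.det ≠ 0 ∧ R₁ = R * Aᵀ := by
  -- over `ℝ`, `Rᴴ` is `Rᵀ` by definition, so the lemma applies to the transpose form directly
  have hR : R * G * (Rᵀ * R) = R := mul_mul_conjTranspose_mul_self_eq_self hG.1
  have hR₁ : R₁ * G₁ * (R₁ᵀ * R₁) = R₁ := mul_mul_conjTranspose_mul_self_eq_self hG₁.1
  have hR₁R : R₁ = R * (G * Rᵀ * R₁) := calc
    R₁ = R₁ * G₁ * R₁ᵀ * R₁ := by rw [Matrix.mul_assoc _ R₁ᵀ, hR₁]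
    _ = R * (G * Rᵀ * R₁) := by rw [← heq]; simp only [Matrix.mul_assoc]
  have hRR₁ : R = R₁ * (G₁ * R₁ᵀ * R) := calc
    R = R * G * Rᵀ * R := by rw [Matrix.mul_assoc _ Rᵀ, hR]
    _ = R₁ * (G₁ * R₁ᵀ * R) := by rw [heq]; simp only [Matrix.mul_assoc]
  have hrange : LinearMap.range R₁.mulVecLin = LinearMap.range R.mulVecLin :=
    le_antisymm (hR₁R ▸ range_mulVecLin_mul_le _ _) (hRR₁ ▸ range_mulVecLin_mul_le _ _)
  obtain ⟨U, hU, rfl⟩ := exists_isUnit_det_mul_eq_of_range_mulVecLin_eq hrange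
  exact ⟨Uᵀ, by rw [det_transpose]; exact hU.ne_zero, by rw [transpose_transpose]⟩
end

section
/- Let X be an n×q real matrix of rank q < n, P = I − X(XᵀX)⁻¹Xᵀ, and let G be the group of transformations g(Y) = X Cᵀ + Y Aᵀ for C ∈ ℝ^{p×q} and nonsingular A ∈ ℝ^{p×p}. Then the map M(Y) = (PY)((PY)ᵀ(PY))⁻(PY)ᵀ is a maximal invariant: M(g(Y)) = M(Y) for all g ∈ G, and M(Y₁) = M(Y) implies Y₁ = g(Y) for some g ∈ G. -/
/-!
Since `P X = 0`, the substitution `B = P Y` turns `g` into `B ↦ B Aᵀ`, and `M(Y) = B G Bᵀ`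
with `G` the pseudoinverse of `BᵀB`. This is the orthogonal projection onto the column space of
`B`: it is symmetric and `B G BᵀB = B`. Two symmetric matrices each of which fixes the other
coincide, so `M` depends only on the column space of `P Y`, which `B ↦ B Aᵀ` preserves.
Conversely, if `P Y` and `P Y₁` have the same column space then `P Y₁ = P Y Aᵀ` for an
invertible `A`, and `Y₁ - Y Aᵀ`, being killed by `P`, lies in the column space of `X`.
-/

open Matrix

open Module

theorem LinearMap.exists_linearEquiv_comp_eq_of_ker_eq {K V W : Type*} [DivisionRing K]
    [AddCommGroup V] [Module K V] [AddCommGroup W] [Module K W] [FiniteDimensional K W]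
    (f g : V →ₗ[K] W) (hker : ker f = ker g) :
    ∃ e : W ≃ₗ[K] W, e.toLinearMap ∘ₗ f = g := by
  obtain ⟨Uf, hUf⟩ := (range f).exists_isCompl
  obtain ⟨Ug, hUg⟩ := (range g).exists_isCompl
  let e₀ : range f ≃ₗ[K] range g :=
    f.quotKerEquivRange.symm.trans ((Submodule.quotEquivOfEq _ _ hker).trans g.quotKerEquivRange)
  have he₀ : ∀ v, (e₀ ⟨f v, mem_range_self f v⟩ : W) = g v := by
    intro v
    have hf : f.quotKerEquivRange.symm ⟨f v, mem_range_self f v⟩ = Submodule.Quotient.mk v :=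
      f.quotKerEquivRange_symm_apply_image v _
    simp only [e₀, LinearEquiv.trans_apply, hf, Submodule.quotEquivOfEq_mk,
      quotKerEquivRange_apply_mk]
  have hcompl : finrank K Uf = finrank K Ug := by
    have hf := Submodule.finrank_add_eq_of_isCompl hUf
    have hg := Submodule.finrank_add_eq_of_isCompl hUg
    have := e₀.finrank_eq
    omega
  refine ⟨(Submodule.prodEquivOfIsCompl _ _ hUf).symm.trans
    ((e₀.prodCongr (LinearEquiv.ofFinrankEq _ _ hcompl)).trans
      (Submodule.prodEquivOfIsCompl _ _ hUg)), LinearMap.ext fun v => ?_⟩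
  have hsplit :
      (Submodule.prodEquivOfIsCompl _ _ hUf).symm (f v) = (⟨f v, mem_range_self f v⟩, 0) :=
    Submodule.prodEquivOfIsCompl_symm_apply_left _ _ hUf ⟨f v, mem_range_self f v⟩
  simp only [coe_comp, LinearEquiv.coe_coe, Function.comp_apply, LinearEquiv.trans_apply, hsplit,
    LinearEquiv.prodCongr_apply, map_zero, Submodule.coe_prodEquivOfIsCompl',
    Submodule.coe_zero, add_zero, he₀]

namespace Matrix

theorem IsSymm.eq_of_mul_eq_of_mul_eq {R k : Type*} [CommSemiring R] [Fintype k]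
    {P Q : Matrix k k R} (hP : P.IsSymm) (hQ : Q.IsSymm) (hPQ : P * Q = Q) (hQP : Q * P = P) :
    P = Q :=
  calc P = Q * P := hQP.symm
    _ = Qᵀ * Pᵀ := by rw [hP.eq, hQ.eq]
    _ = Q := by rw [← transpose_mul, hPQ, hQ.eq]

variable {K m k : Type*} [Field K] [Fintype m] [Fintype k] [DecidableEq m] [DecidableEq k]

theorem isUnit_det_of_rank_eq_card {A : Matrix k k K} (h : A.rank = Fintype.card k) :
    IsUnit A.det := by
  have htop : LinearMap.range A.mulVecLin = ⊤ :=
    Submodule.eq_top_of_finrank_eq (by rw [← rank, h, finrank_fintype_fun_eq_card])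
  rw [← isUnit_iff_isUnit_det, ← mulVec_surjective_iff_isUnit, ← coe_mulVecLin]
  exact LinearMap.range_eq_top.mp htop

theorem exists_det_ne_zero_mul_eq {B B₁ : Matrix m k K} {U V : Matrix k k K}
    (h₁ : B * U = B₁) (h₂ : B₁ * V = B) : ∃ A : Matrix k k K, A.det ≠ 0 ∧ B * A = B₁ := by
  have hker : LinearMap.ker (toLin' Bᵀ) = LinearMap.ker (toLin' B₁ᵀ) := by
    apply le_antisymm
    · rw [← h₁, transpose_mul, toLin'_mul]
      exact LinearMap.ker_le_ker_comp _ _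
    · rw [← h₂, transpose_mul, toLin'_mul]
      exact LinearMap.ker_le_ker_comp _ _
  obtain ⟨e, he⟩ := LinearMap.exists_linearEquiv_comp_eq_of_ker_eq _ _ hker
  refine ⟨(LinearMap.toMatrix' e.toLinearMap)ᵀ, ?_, ?_⟩
  · rw [det_transpose, LinearMap.det_toMatrix']
    exact e.isUnit_det'.ne_zero
  · have := congrArg LinearMap.toMatrix' he
    rw [LinearMap.toMatrix'_comp, LinearMap.toMatrix'_toLin', LinearMap.toMatrix'_toLin'] at this
    rw [← transpose_transpose B₁, ← this, transpose_mul, transpose_transpose]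

end Matrix

namespace IsMoorePenrose

variable {m k k' : Type*} [Fintype m] [Fintype k] [Fintype k']

theorem transpose {A : Matrix m k ℝ} {G : Matrix k m ℝ} (h : IsMoorePenrose A G) :
    IsMoorePenrose Aᵀ Gᵀ := by
  obtain ⟨h₁, h₂, h₃, h₄⟩ := h
  refine ⟨?_, ?_, ?_, ?_⟩
  · rw [← transpose_mul, ← transpose_mul, ← Matrix.mul_assoc, h₁]
  · rw [← transpose_mul, ← transpose_mul, ← Matrix.mul_assoc, h₂]
  · simpa only [transpose_mul, transpose_transpose] using h₄.symm
  · simpa only [transpose_mul, transpose_transpose] using h₃.symm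

theorem unique {A : Matrix m k ℝ} {G H : Matrix k m ℝ} (hG : IsMoorePenrose A G)
    (hH : IsMoorePenrose A H) : G = H := by
  obtain ⟨hG₁, hG₂, hG₃, hG₄⟩ := hG
  obtain ⟨hH₁, hH₂, hH₃, hH₄⟩ := hH
  have hAG : A * G = A * H :=
    calc A * G = (A * H * A * G)ᵀ := by rw [hH₁, hG₃]
      _ = (A * G)ᵀ * (A * H)ᵀ := by rw [← transpose_mul]; simp only [Matrix.mul_assoc]
      _ = A * H := by rw [hG₃, hH₃, ← Matrix.mul_assoc, hG₁]
  have hGA : G * A = H * A :=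
    calc G * A = (G * (A * H * A))ᵀ := by rw [hH₁, hG₄]
      _ = (H * A)ᵀ * (G * A)ᵀ := by rw [← transpose_mul]; simp only [Matrix.mul_assoc]
      _ = H * A := by rw [hH₄, hG₄, Matrix.mul_assoc, ← Matrix.mul_assoc A, hG₁]
  calc G = H * A * H := by rw [← hG₂, hGA, Matrix.mul_assoc, hAG, ← Matrix.mul_assoc]
    _ = H := hH₂

theorem isSymm {S G : Matrix k k ℝ} (hS : S.IsSymm) (h : IsMoorePenrose S G) : G.IsSymm :=
  unique (hS.eq ▸ h.transpose) h

variable {B : Matrix m k ℝ} {G : Matrix k k ℝ}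

theorem isSymm_mul_mul_transpose (hG : IsMoorePenrose (Bᵀ * B) G) : (B * G * Bᵀ).IsSymm := by
  rw [IsSymm, transpose_mul, transpose_mul, transpose_transpose,
    (isSymm (transpose_mul _ _) hG).eq, Matrix.mul_assoc]

theorem mul_mul_transpose_mul_eq_self (hG : IsMoorePenrose (Bᵀ * B) G) : B * G * Bᵀ * B = B := by
  have hGs : Gᵀ = G := (isSymm (transpose_mul _ _) hG).eq
  -- `D = B G BᵀB - B` has `DᵀD = 0` because `BᵀB G BᵀB = BᵀB` and `Gᵀ = G`.
  have hD : (B * G * Bᵀ * B - B)ᵀ * (B * G * Bᵀ * B - B) = 0 := by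
    simp only [transpose_sub, transpose_mul, transpose_transpose, hGs, Matrix.sub_mul,
      Matrix.mul_sub, ← Matrix.mul_assoc]
    have h₁ := hG.1
    simp only [← Matrix.mul_assoc] at h₁
    simp only [h₁, sub_self]
  rw [← conjTranspose_eq_transpose_of_trivial, conjTranspose_mul_self_eq_zero] at hD
  exact sub_eq_zero.mp hD

theorem mul_mul_transpose_eq_of_mul_eq {B₁ : Matrix m k' ℝ} {G₁ : Matrix k' k' ℝ}
    (hG : IsMoorePenrose (Bᵀ * B) G) (hG₁ : IsMoorePenrose (B₁ᵀ * B₁) G₁)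
    {K₁ : Matrix k k' ℝ} {K₂ : Matrix k' k ℝ} (h₁ : B * K₁ = B₁) (h₂ : B₁ * K₂ = B) :
    B₁ * G₁ * B₁ᵀ = B * G * Bᵀ := by
  have hB₁ : B * G * Bᵀ * B₁ = B₁ := by
    rw [← h₁, ← Matrix.mul_assoc, mul_mul_transpose_mul_eq_self hG]
  have hB : B₁ * G₁ * B₁ᵀ * B = B := by
    rw [← h₂, ← Matrix.mul_assoc, mul_mul_transpose_mul_eq_self hG₁]
  refine (IsSymm.eq_of_mul_eq_of_mul_eq (isSymm_mul_mul_transpose hG)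
    (isSymm_mul_mul_transpose hG₁) ?_ ?_).symm
  · simp only [← Matrix.mul_assoc, hB₁]
  · simp only [← Matrix.mul_assoc, hB]

theorem mul_eq_of_mul_mul_transpose_eq {B₁ : Matrix m k' ℝ} {G₁ : Matrix k' k' ℝ}
    (hG₁ : IsMoorePenrose (B₁ᵀ * B₁) G₁) (h : B₁ * G₁ * B₁ᵀ = B * G * Bᵀ) :
    B * (G * Bᵀ * B₁) = B₁ := by
  rw [← Matrix.mul_assoc, ← Matrix.mul_assoc, ← h, mul_mul_transpose_mul_eq_self hG₁]

end IsMoorePenrose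

section Residual

variable {R n q p : Type*} [CommRing R] [Fintype n] [Fintype q] [DecidableEq n] [DecidableEq q]

theorem residual_mul_self {X : Matrix n q R} (hX : IsUnit (Xᵀ * X).det) :
    (1 - X * (Xᵀ * X)⁻¹ * Xᵀ) * X = 0 := by
  rw [Matrix.sub_mul, Matrix.one_mul, Matrix.mul_assoc, Matrix.mul_assoc, nonsing_inv_mul _ hX,
    Matrix.mul_one, sub_self]

theorem exists_eq_mul_transpose_of_residual_mul_eq_zero (X : Matrix n q R) {Z : Matrix n p R}
    (h : (1 - X * (Xᵀ * X)⁻¹ * Xᵀ) * Z = 0) : ∃ C : Matrix p q R, Z = X * Cᵀ := by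
  refine ⟨((Xᵀ * X)⁻¹ * Xᵀ * Z)ᵀ, ?_⟩
  rw [transpose_transpose, ← Matrix.mul_assoc, ← Matrix.mul_assoc, ← sub_eq_zero, ← h,
    Matrix.sub_mul, Matrix.one_mul]

end Residual

theorem stmt2_general {n p q : ℕ} (X : Matrix (Fin n) (Fin q) ℝ)
    (hX : X.rank = q) :
    let P := (1 : Matrix (Fin n) (Fin n) ℝ) - X * (Xᵀ * X)⁻¹ * Xᵀ
    (∀ (Y : Matrix (Fin n) (Fin p) ℝ) (C : Matrix (Fin p) (Fin q) ℝ)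
        (A : Matrix (Fin p) (Fin p) ℝ), A.det ≠ 0 →
        ∀ (G₁ G₂ : Matrix (Fin p) (Fin p) ℝ),
          IsMoorePenrose ((P * Y)ᵀ * (P * Y)) G₁ →
          IsMoorePenrose ((P * (X * Cᵀ + Y * Aᵀ))ᵀ * (P * (X * Cᵀ + Y * Aᵀ))) G₂ →
          (P * (X * Cᵀ + Y * Aᵀ)) * G₂ * (P * (X * Cᵀ + Y * Aᵀ))ᵀ
            = (P * Y) * G₁ * (P * Y)ᵀ)
    ∧
    (∀ (Y Y₁ : Matrix (Fin n) (Fin p) ℝ) (G₁ G₂ : Matrix (Fin p) (Fin p) ℝ),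
        IsMoorePenrose ((P * Y)ᵀ * (P * Y)) G₁ →
        IsMoorePenrose ((P * Y₁)ᵀ * (P * Y₁)) G₂ →
        (P * Y₁) * G₂ * (P * Y₁)ᵀ = (P * Y) * G₁ * (P * Y)ᵀ →
        ∃ (C : Matrix (Fin p) (Fin q) ℝ) (A : Matrix (Fin p) (Fin p) ℝ),
          A.det ≠ 0 ∧ Y₁ = X * Cᵀ + Y * Aᵀ) := by
  intro P
  have hXX : IsUnit (Xᵀ * X).det :=
    isUnit_det_of_rank_eq_card (by rw [rank_transpose_mul_self, hX, Fintype.card_fin])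
  refine ⟨fun Y C A hA G₁ G₂ h₁ h₂ => ?_, fun Y Y₁ G₁ G₂ h₁ h₂ hM => ?_⟩
  · have hPg : P * (X * Cᵀ + Y * Aᵀ) = P * Y * Aᵀ := by
      rw [Matrix.mul_add, ← Matrix.mul_assoc, residual_mul_self hXX, Matrix.zero_mul, zero_add,
        Matrix.mul_assoc]
    have hAt : IsUnit Aᵀ.det := by rw [det_transpose]; exact hA.isUnit
    rw [hPg] at h₂ ⊢
    exact h₁.mul_mul_transpose_eq_of_mul_eq h₂ rfl
      (by rw [Matrix.mul_assoc, mul_nonsing_inv _ hAt, Matrix.mul_one])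
  · obtain ⟨A, hA, hYA⟩ := exists_det_ne_zero_mul_eq
      (h₂.mul_eq_of_mul_mul_transpose_eq hM) (h₁.mul_eq_of_mul_mul_transpose_eq hM.symm)
    obtain ⟨C, hC⟩ := exists_eq_mul_transpose_of_residual_mul_eq_zero X (Z := Y₁ - Y * A)
      (by rw [Matrix.mul_sub, ← Matrix.mul_assoc, hYA, sub_self])
    refine ⟨C, Aᵀ, by rwa [det_transpose], ?_⟩
    rw [transpose_transpose, ← hC, sub_add_cancel]

/-- `M(Y) = (PY)((PY)ᵀ(PY))⁻(PY)ᵀ` is a maximal invariant for the group of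
transformations `g(Y) = X Cᵀ + Y Aᵀ` with `A` nonsingular:
it is invariant, and equality of values implies equivalence under the group. -/
theorem stmt2 {n p q : ℕ} (X : Matrix (Fin n) (Fin q) ℝ)
    (hq : q < n) (hX : X.rank = q) :
    let P := (1 : Matrix (Fin n) (Fin n) ℝ) - X * (Xᵀ * X)⁻¹ * Xᵀ
    (∀ (Y : Matrix (Fin n) (Fin p) ℝ) (C : Matrix (Fin p) (Fin q) ℝ)
        (A : Matrix (Fin p) (Fin p) ℝ), A.det ≠ 0 →
        ∀ (G₁ G₂ : Matrix (Fin p) (Fin p) ℝ),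
          IsMoorePenrose ((P * Y)ᵀ * (P * Y)) G₁ →
          IsMoorePenrose ((P * (X * Cᵀ + Y * Aᵀ))ᵀ * (P * (X * Cᵀ + Y * Aᵀ))) G₂ →
          (P * (X * Cᵀ + Y * Aᵀ)) * G₂ * (P * (X * Cᵀ + Y * Aᵀ))ᵀ
            = (P * Y) * G₁ * (P * Y)ᵀ)
    ∧
    (∀ (Y Y₁ : Matrix (Fin n) (Fin p) ℝ) (G₁ G₂ : Matrix (Fin p) (Fin p) ℝ),
        IsMoorePenrose ((P * Y)ᵀ * (P * Y)) G₁ →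
        IsMoorePenrose ((P * Y₁)ᵀ * (P * Y₁)) G₂ →
        (P * Y₁) * G₂ * (P * Y₁)ᵀ = (P * Y) * G₁ * (P * Y)ᵀ →
        ∃ (C : Matrix (Fin p) (Fin q) ℝ) (A : Matrix (Fin p) (Fin p) ℝ),
          A.det ≠ 0 ∧ Y₁ = X * Cᵀ + Y * Aᵀ) :=
  stmt2_general X hX
end

section
/- The map M(Y) = (PY)((PY)ᵀ(PY))⁻(PY)ᵀ is invariant under the group of transformations g(Y) = X Cᵀ + Y Aᵀ for C ∈ ℝ^{p×q} and nonsingular A ∈ ℝ^{p×p}, i.e., M(X Cᵀ + Y Aᵀ) = M(Y) for all such C, A. -/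
open Matrix

/-- Uniqueness of the Moore–Penrose pseudoinverse. -/
lemma mp_unique {m n : Type*} [Fintype m] [Fintype n]
    {A : Matrix m n ℝ} {G H : Matrix n m ℝ}
    (hG : IsMoorePenrose A G) (hH : IsMoorePenrose A H) : G = H := by
  obtain ⟨g1, g2, g3, g4⟩ := hG
  obtain ⟨h1, h2, h3, h4⟩ := hH
  have hag : A * G = A * H := by
    calc A * G = (A * G)ᵀ := g3.symm
    _ = (A * H * A * G)ᵀ := by rw [h1]
    _ = (A * G)ᵀ * (A * H)ᵀ := by
        rw [show A * H * A * G = (A * H) * (A * G) by rw [Matrix.mul_assoc],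
          Matrix.transpose_mul]
    _ = (A * G) * (A * H) := by rw [g3, h3]
    _ = A * (G * A * H) := by simp [Matrix.mul_assoc]
    _ = (A * G * A) * H := by simp [Matrix.mul_assoc]
    _ = A * H := by rw [g1]
  have hga : G * A = H * A := by
    calc G * A = (G * A)ᵀ := g4.symm
    _ = (G * (A * H * A))ᵀ := by rw [h1]
    _ = ((G * A) * (H * A))ᵀ := by rw [show G * (A * H * A) = (G * A) * (H * A) by
          simp [Matrix.mul_assoc]]
    _ = (H * A)ᵀ * (G * A)ᵀ := by rw [Matrix.transpose_mul]
    _ = (H * A) * (G * A) := by rw [g4, h4]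
    _ = H * ((A * G) * A) := by simp [Matrix.mul_assoc]
    _ = H * A := by rw [g1]
  calc G = G * A * G := g2.symm
  _ = H * A * G := by rw [hga]
  _ = H * (A * G) := by rw [Matrix.mul_assoc]
  _ = H * (A * H) := by rw [hag]
  _ = H := by rw [← Matrix.mul_assoc]; exact h2

/-- The pseudoinverse of a symmetric matrix is symmetric. -/
lemma mp_symm {m : Type*} [Fintype m] {S : Matrix m m ℝ} {G : Matrix m m ℝ}
    (hS : Sᵀ = S) (hG : IsMoorePenrose S G) : Gᵀ = G := by
  refine mp_unique ?_ hG
  obtain ⟨g1, g2, g3, g4⟩ := hG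
  refine ⟨?_, ?_, ?_, ?_⟩
  · calc S * Gᵀ * S = (Sᵀ * G * Sᵀ)ᵀ := by simp [Matrix.transpose_mul, Matrix.mul_assoc]
    _ = S := by rw [hS, g1, hS]
  · calc Gᵀ * S * Gᵀ = (G * Sᵀ * G)ᵀ := by simp [Matrix.transpose_mul, Matrix.mul_assoc]
    _ = Gᵀ := by rw [hS, g2]
  · have a : (S * Gᵀ)ᵀ = G * S := by
      rw [Matrix.transpose_mul, Matrix.transpose_transpose, hS]
    have b : S * Gᵀ = G * S := by
      calc S * Gᵀ = (G * Sᵀ)ᵀ := by simp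
      _ = (G * S)ᵀ := by rw [hS]
      _ = G * S := g4
    rw [a, b]
  · have a : (Gᵀ * S)ᵀ = S * G := by
      rw [Matrix.transpose_mul, Matrix.transpose_transpose, hS]
    have b : Gᵀ * S = S * G := by
      calc Gᵀ * S = (Sᵀ * G)ᵀ := by simp
      _ = (S * G)ᵀ := by rw [hS]
      _ = S * G := g3
    rw [a, b]

/-- Key identity: `B * G * Bᵀ * B = B` when `G` is a pseudoinverse of `BᵀB`. -/
lemma mp_key {m k : Type*} [Fintype m] [Fintype k] {B : Matrix m k ℝ}
    {G : Matrix k k ℝ} (hG : IsMoorePenrose (Bᵀ * B) G) :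
    B * G * Bᵀ * B = B := by
  have hGsymm : Gᵀ = G := mp_symm (by simp) hG
  obtain ⟨g1, g2, g3, g4⟩ := hG
  have hD : (B - B * G * (Bᵀ * B)) = 0 := by
    rw [← Matrix.conjTranspose_mul_self_eq_zero]
    have : (B - B * G * (Bᵀ * B))ᴴ = (B - B * G * (Bᵀ * B))ᵀ := rfl
    rw [this]
    rw [Matrix.transpose_sub, Matrix.sub_mul, Matrix.mul_sub, Matrix.mul_sub]
    have e1 : Bᵀ * (B * G * (Bᵀ * B)) = (Bᵀ * B) * G * (Bᵀ * B) := by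
      simp [Matrix.mul_assoc]
    have e2 : (B * G * (Bᵀ * B))ᵀ * B = ((Bᵀ * B) * G * (Bᵀ * B))ᵀ := by
      simp [Matrix.transpose_mul, Matrix.mul_assoc]
    have e3 : (B * G * (Bᵀ * B))ᵀ * (B * G * (Bᵀ * B))
        = ((Bᵀ * B) * G * (Bᵀ * B))ᵀ * (G * (Bᵀ * B)) := by
      simp [Matrix.transpose_mul, Matrix.mul_assoc]
    rw [e1, e2, e3, g1]
    have : (Bᵀ * B)ᵀ = Bᵀ * B := by simp
    rw [this]
    have : Bᵀ * B * (G * (Bᵀ * B)) = Bᵀ * B := by rw [← Matrix.mul_assoc, g1]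
    rw [this]
    abel
  have := sub_eq_zero.mp hD
  calc B * G * Bᵀ * B = B * G * (Bᵀ * B) := by rw [Matrix.mul_assoc]
  _ = B := this.symm

/-- `M(Y) = (PY)((PY)ᵀ(PY))⁻(PY)ᵀ` is invariant under `g(Y) = X Cᵀ + Y Aᵀ`
for `C ∈ ℝ^{p×q}` and nonsingular `A ∈ ℝ^{p×p}`. -/
theorem stmt3 {n p q : ℕ} (X : Matrix (Fin n) (Fin q) ℝ)
    (hq : q < n) (hX : X.rank = q) :
    let P := (1 : Matrix (Fin n) (Fin n) ℝ) - X * (Xᵀ * X)⁻¹ * Xᵀ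
    ∀ (Y : Matrix (Fin n) (Fin p) ℝ) (C : Matrix (Fin p) (Fin q) ℝ)
      (A : Matrix (Fin p) (Fin p) ℝ), A.det ≠ 0 →
      ∀ (G₁ G₂ : Matrix (Fin p) (Fin p) ℝ),
        IsMoorePenrose ((P * Y)ᵀ * (P * Y)) G₁ →
        IsMoorePenrose ((P * (X * Cᵀ + Y * Aᵀ))ᵀ * (P * (X * Cᵀ + Y * Aᵀ))) G₂ →
        (P * (X * Cᵀ + Y * Aᵀ)) * G₂ * (P * (X * Cᵀ + Y * Aᵀ))ᵀ
          = (P * Y) * G₁ * (P * Y)ᵀ := by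
  intro P Y C A hA G₁ G₂ hG₁ hG₂
  -- XᵀX is invertible
  have hXtX : IsUnit (Xᵀ * X) := by
    rw [← Matrix.mulVec_surjective_iff_isUnit]
    have hr : (Xᵀ * X).rank = q := by rw [Matrix.rank_transpose_mul_self, hX]
    have htop : LinearMap.range (Xᵀ * X).mulVecLin = ⊤ := by
      apply Submodule.eq_top_of_finrank_eq
      rw [← Matrix.rank, hr]
      simp
    intro v
    have : v ∈ LinearMap.range (Xᵀ * X).mulVecLin := htop ▸ Submodule.mem_top
    obtain ⟨w, hw⟩ := this
    exact ⟨w, hw⟩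
  -- P * X = 0
  have hPX : P * X = 0 := by
    show ((1 : Matrix (Fin n) (Fin n) ℝ) - X * (Xᵀ * X)⁻¹ * Xᵀ) * X = 0
    rw [Matrix.sub_mul, Matrix.one_mul]
    have : X * (Xᵀ * X)⁻¹ * Xᵀ * X = X * ((Xᵀ * X)⁻¹ * (Xᵀ * X)) := by
      simp [Matrix.mul_assoc]
    rw [this, Matrix.nonsing_inv_mul _ (by
      rwa [← Matrix.isUnit_iff_isUnit_det])]
    simp
  -- P (XCᵀ + YAᵀ) = (PY) Aᵀ
  have hPg : P * (X * Cᵀ + Y * Aᵀ) = (P * Y) * Aᵀ := by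
    rw [Matrix.mul_add, ← Matrix.mul_assoc, hPX]
    simp [Matrix.mul_assoc]
  rw [hPg] at hG₂ ⊢
  set B := P * Y with hB
  -- symmetry of G₁ and G₂
  have hG₁s : G₁ᵀ = G₁ := mp_symm (by simp) hG₁
  have hG₂s : G₂ᵀ = G₂ := mp_symm (by simp) hG₂
  -- key identities
  have hk₁ : B * G₁ * Bᵀ * B = B := mp_key hG₁
  have hk₂ : (B * Aᵀ) * G₂ * (B * Aᵀ)ᵀ * (B * Aᵀ) = B * Aᵀ := mp_key hG₂
  set E := B * G₁ * Bᵀ with hE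
  set F := (B * Aᵀ) * G₂ * (B * Aᵀ)ᵀ with hF
  have hEs : Eᵀ = E := by
    rw [hE]; simp [Matrix.transpose_mul, hG₁s, Matrix.mul_assoc]
  have hFs : Fᵀ = F := by
    rw [hF]; simp [Matrix.transpose_mul, hG₂s, Matrix.mul_assoc]
  have hEB : E * B = B := hk₁
  have hFB : F * B = B := by
    have hAu : IsUnit Aᵀ := by
      rw [Matrix.isUnit_iff_isUnit_det, Matrix.det_transpose]
      exact isUnit_iff_ne_zero.mpr hA
    have := hk₂
    have h2 : F * B * Aᵀ = B * Aᵀ := by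
      rw [← this]; simp [hF, Matrix.mul_assoc]
    calc F * B = F * B * (Aᵀ * (Aᵀ)⁻¹) := by
          rw [Matrix.mul_nonsing_inv _ ((Matrix.isUnit_iff_isUnit_det _).mp hAu)]; simp
    _ = (F * B * Aᵀ) * (Aᵀ)⁻¹ := by simp [Matrix.mul_assoc]
    _ = (B * Aᵀ) * (Aᵀ)⁻¹ := by rw [h2]
    _ = B * (Aᵀ * (Aᵀ)⁻¹) := by rw [Matrix.mul_assoc]
    _ = B := by rw [Matrix.mul_nonsing_inv _ ((Matrix.isUnit_iff_isUnit_det _).mp hAu)]; simp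
  have hFE : F * E = E := by
    rw [hE, ← Matrix.mul_assoc, ← Matrix.mul_assoc, hFB]
  have hEF : E * F = F := by
    have hEBA : E * (B * Aᵀ) = B * Aᵀ := by rw [← Matrix.mul_assoc, hEB]
    rw [hF, ← Matrix.mul_assoc, ← Matrix.mul_assoc, hEBA]
  calc F = Fᵀ := hFs.symm
  _ = (E * F)ᵀ := by rw [hEF]
  _ = Fᵀ * Eᵀ := by rw [Matrix.transpose_mul]
  _ = F * E := by rw [hFs, hEs]
  _ = E := hFE
end

section
/- For n > p, a fixed U ∈ ℝ^{n×p} with UᵀU = I_p, and Ψ = E Λ Eᵀ with E = [U, U⊥] and eigenvalues λ₁ ≥ λ₂ ≥ … ≥ λₙ > 0, one has p·log det(Ψ) + n·log det(Uᵀ Ψ⁻¹ U) ≤ −(n−p)·log(λ₁/λ_p). -/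
/-!
Conjugating by the orthogonal `E` gives `det Ψ = ∏ λᵢ`, and since the columns of `U` are the first
`p` columns of `E`, `Uᵀ Ψ⁻¹ U = diag(λ₁⁻¹, …, λ_p⁻¹)`. With `ℓᵢ = log λᵢ` the left-hand side becomes
`p ∑_{i > p} ℓᵢ - (n - p) ∑_{i ≤ p} ℓᵢ`. Monotonicity bounds the first sum by `(n - p) ℓ_p` and the
second from below by `ℓ₁ + (p - 1) ℓ_p`, which leaves `-(n - p)(ℓ₁ - ℓ_p)`.
-/

open Matrix Finset

namespace Matrix

variable {m n R : Type*} [Fintype n] [DecidableEq n] [CommRing R]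

theorem det_mul_mul_transpose_of_transpose_mul_self {E : Matrix n n R} (hE : Eᵀ * E = 1)
    (A : Matrix n n R) : (E * A * Eᵀ).det = A.det := by
  rw [det_mul, det_mul, mul_right_comm, mul_comm E.det, ← det_mul, hE, det_one, one_mul]

theorem inv_mul_mul_transpose_of_transpose_mul_self {E : Matrix n n R} (hE : Eᵀ * E = 1)
    (A : Matrix n n R) : (E * A * Eᵀ)⁻¹ = E * A⁻¹ * Eᵀ := by
  rw [mul_inv_rev, mul_inv_rev, inv_eq_left_inv hE, inv_eq_left_inv (mul_eq_one_comm.mp hE),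
    mul_assoc]

theorem inv_diagonal_of_ne_zero {K : Type*} [Field K] {v : n → K} (hv : ∀ i, v i ≠ 0) :
    (diagonal v)⁻¹ = diagonal v⁻¹ := by
  refine inv_eq_left_inv ?_
  rw [diagonal_mul_diagonal, ← diagonal_one]
  exact congrArg diagonal (funext fun i => inv_mul_cancel₀ (hv i))

theorem submatrix_transpose_mul_mul_submatrix_of_transpose_mul_self {E : Matrix n n R}
    (hE : Eᵀ * E = 1) (f : m → n) (A : Matrix n n R) :
    (E.submatrix id f)ᵀ * (E * A * Eᵀ) * E.submatrix id f = A.submatrix f f := by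
  have hcol : E.submatrix id f = E * (1 : Matrix n n R).submatrix id f :=
    (mul_submatrix_one (Equiv.refl n) f E).symm
  have hrow : ((1 : Matrix n n R).submatrix id f)ᵀ * A = A.submatrix f id := by
    rw [transpose_submatrix, transpose_one]
    exact one_submatrix_mul f (Equiv.refl n) A
  calc (E.submatrix id f)ᵀ * (E * A * Eᵀ) * E.submatrix id f
      = ((1 : Matrix n n R).submatrix id f)ᵀ * (Eᵀ * E) * A * (Eᵀ * E)
          * (1 : Matrix n n R).submatrix id f := by
        rw [hcol, transpose_mul]
        simp only [Matrix.mul_assoc]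
    _ = (A.submatrix f id) * (1 : Matrix n n R).submatrix id f := by
        rw [hE, Matrix.mul_one, Matrix.mul_one, hrow]
    _ = A.submatrix f f := mul_submatrix_one (Equiv.refl n) f _

end Matrix

section AntitoneSums

variable {g : ℕ → ℝ} {n p : ℕ}

theorem AntitoneOn.sum_Ico_le (hg : AntitoneOn g (Set.Iio n)) (hpn : p ≤ n) :
    ∑ i ∈ Ico p n, g i ≤ ((n : ℝ) - p) * g (p - 1) := by
  have h := sum_le_card_nsmul (Ico p n) g (g (p - 1)) fun i hi => by
    obtain ⟨hpi, hin⟩ := mem_Ico.mp hi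
    exact hg (show p - 1 < n by omega) hin (by omega)
  rwa [Nat.card_Ico, nsmul_eq_mul, Nat.cast_sub hpn] at h

theorem AntitoneOn.add_mul_le_sum_range (hg : AntitoneOn g (Set.Iio n)) (hp : 0 < p)
    (hpn : p ≤ n) : g 0 + ((p : ℝ) - 1) * g (p - 1) ≤ ∑ i ∈ range p, g i := by
  have h := card_nsmul_le_sum (Ico 1 p) g (g (p - 1)) fun i hi => by
    obtain ⟨_, hip⟩ := mem_Ico.mp hi
    exact hg (show i < n by omega) (show p - 1 < n by omega) (by omega)
  rw [Nat.card_Ico, nsmul_eq_mul, Nat.cast_sub hp, Nat.cast_one] at h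
  rw [← sum_range_add_sum_Ico g hp, sum_range_one]
  linarith

theorem AntitoneOn.mul_sum_range_sub_mul_sum_range_le (hg : AntitoneOn g (Set.Iio n))
    (hp : 0 < p) (hpn : p ≤ n) :
    p * ∑ i ∈ range n, g i - n * ∑ i ∈ range p, g i ≤ -((n : ℝ) - p) * (g 0 - g (p - 1)) := by
  rw [← sum_range_add_sum_Ico g hpn]
  have hp' : (0 : ℝ) ≤ p := by positivity
  have hnp : (0 : ℝ) ≤ n - p := sub_nonneg.mpr (by exact_mod_cast hpn)
  nlinarith [mul_le_mul_of_nonneg_left (hg.sum_Ico_le hpn) hp',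
    mul_le_mul_of_nonneg_left (hg.add_mul_le_sum_range hp hpn) hnp]

theorem Antitone.mul_sum_sub_mul_sum_castLE_le {ℓ : Fin n → ℝ} (hℓ : Antitone ℓ) (hp : 0 < p)
    (hpn : p ≤ n) :
    p * ∑ i, ℓ i - n * ∑ j : Fin p, ℓ (Fin.castLE hpn j)
      ≤ -((n : ℝ) - p) * (ℓ ⟨0, hp.trans_le hpn⟩ - ℓ ⟨p - 1, by omega⟩) := by
  set g : ℕ → ℝ := fun i => if h : i < n then ℓ ⟨i, h⟩ else 0
  have hg : ∀ (i : ℕ) (hi : i < n), g i = ℓ ⟨i, hi⟩ := fun i hi => dif_pos hi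
  have hanti : AntitoneOn g (Set.Iio n) := fun i hi j hj hij => by
    rw [hg i hi, hg j hj]
    exact hℓ (Fin.mk_le_mk.mpr hij)
  have hsum_n : ∑ i, ℓ i = ∑ i ∈ range n, g i := by
    rw [← Fin.sum_univ_eq_sum_range]
    exact sum_congr rfl fun i _ => (hg i i.isLt).symm
  have hsum_p : ∑ j : Fin p, ℓ (Fin.castLE hpn j) = ∑ i ∈ range p, g i := by
    rw [← Fin.sum_univ_eq_sum_range]
    exact sum_congr rfl fun j _ => (hg j (j.isLt.trans_le hpn)).symm
  rw [hsum_n, hsum_p, ← hg 0, ← hg (p - 1)]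
  exact hanti.mul_sum_range_sub_mul_sum_range_le hp hpn

end AntitoneSums

theorem stmt10_general {n p : ℕ} (hp : 0 < p) (hpn : p < n)
    (U : Matrix (Fin n) (Fin p) ℝ)
    (E : Matrix (Fin n) (Fin n) ℝ) (hE1 : Eᵀ * E = 1)
    (hEU : ∀ (i : Fin n) (j : Fin p), E i (Fin.castLE hpn.le j) = U i j)
    (lam : Fin n → ℝ) (hpos : ∀ i, 0 < lam i)
    (hdec : ∀ i j : Fin n, i ≤ j → lam j ≤ lam i) :
    (p : ℝ) * Real.log (E * Matrix.diagonal lam * Eᵀ).det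
      + (n : ℝ) * Real.log (Uᵀ * (E * Matrix.diagonal lam * Eᵀ)⁻¹ * U).det
      ≤ -((n : ℝ) - (p : ℝ)) *
          Real.log (lam ⟨0, hp.trans hpn⟩
            / lam ⟨p - 1, (Nat.sub_lt hp Nat.one_pos).trans hpn⟩) := by
  obtain rfl : U = E.submatrix id (Fin.castLE hpn.le) := by
    ext i j
    exact (hEU i j).symm
  have hlog : Antitone fun i => Real.log (lam i) := fun i j hij =>
    Real.log_le_log (hpos j) (hdec i j hij)
  rw [det_mul_mul_transpose_of_transpose_mul_self hE1,
    inv_mul_mul_transpose_of_transpose_mul_self hE1,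
    submatrix_transpose_mul_mul_submatrix_of_transpose_mul_self hE1,
    inv_diagonal_of_ne_zero fun i => (hpos i).ne',
    submatrix_diagonal _ _ (Fin.castLE_injective _), det_diagonal, det_diagonal,
    Real.log_prod fun i _ => (hpos i).ne',
    Real.log_prod (f := lam⁻¹ ∘ Fin.castLE hpn.le) fun j _ => inv_ne_zero (hpos _).ne',
    Real.log_div (hpos _).ne' (hpos _).ne']
  simp only [Function.comp_apply, Pi.inv_apply, Real.log_inv, sum_neg_distrib]
  linarith [hlog.mul_sum_sub_mul_sum_castLE_le hp hpn.le]

/-- For `Ψ = E Λ Eᵀ` with `E` orthogonal whose first `p` columns are `U`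
(`UᵀU = I_p`) and decreasing eigenvalues `λ₁ ≥ … ≥ λₙ > 0`,
`p·log det Ψ + n·log det(Uᵀ Ψ⁻¹ U) ≤ −(n−p)·log(λ₁/λ_p)`. -/
theorem stmt10 {n p : ℕ} (hp : 0 < p) (hpn : p < n)
    (U : Matrix (Fin n) (Fin p) ℝ) (hU : Uᵀ * U = 1)
    (E : Matrix (Fin n) (Fin n) ℝ) (hE1 : Eᵀ * E = 1) (hE2 : E * Eᵀ = 1)
    (hEU : ∀ (i : Fin n) (j : Fin p), E i (Fin.castLE hpn.le j) = U i j)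
    (lam : Fin n → ℝ) (hpos : ∀ i, 0 < lam i)
    (hdec : ∀ i j : Fin n, i ≤ j → lam j ≤ lam i) :
    (p : ℝ) * Real.log (E * Matrix.diagonal lam * Eᵀ).det
      + (n : ℝ) * Real.log (Uᵀ * (E * Matrix.diagonal lam * Eᵀ)⁻¹ * U).det
      ≤ -((n : ℝ) - (p : ℝ)) *
          Real.log (lam ⟨0, hp.trans hpn⟩
            / lam ⟨p - 1, (Nat.sub_lt hp Nat.one_pos).trans hpn⟩) :=
  stmt10_general hp hpn U E hE1 hEU lam hpos hdec
end

section
/- The family of densities p(U | ω) = (1+ω)^{−p/2} (1 − t·ω/(1+ω))^{−n/2}, parameterized by ω ≥ 0 and viewed as a function of the statistic t ∈ [0,1], has a monotone likelihood ratio in t: for 0 ≤ ω₁ < ω₂, the ratio p(U|ω₂)/p(U|ω₁) is a strictly increasing function of t. -/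
/-- The family `p(U|ω) = (1+ω)^{−p/2}(1 − tω/(1+ω))^{−n/2}` has a monotone
likelihood ratio in `t ∈ [0,1]`: for `0 ≤ ω₁ < ω₂` the likelihood ratio is
strictly increasing in `t`. -/
theorem stmt11 {n p : ℕ} (hp : 1 ≤ p) (hpn : p < n)
    (ω₁ ω₂ : ℝ) (h1 : 0 ≤ ω₁) (h12 : ω₁ < ω₂) :
    StrictMonoOn (fun t : ℝ =>
      ((1 + ω₂) ^ (-(p : ℝ) / 2) * (1 - t * ω₂ / (1 + ω₂)) ^ (-(n : ℝ) / 2)) /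
      ((1 + ω₁) ^ (-(p : ℝ) / 2) * (1 - t * ω₁ / (1 + ω₁)) ^ (-(n : ℝ) / 2)))
      (Set.Icc 0 1) := by
  have hA1 : (0:ℝ) < 1 + ω₁ := by linarith
  have hA2 : (0:ℝ) < 1 + ω₂ := by linarith
  set a := ω₁ / (1 + ω₁) with ha_def
  set b := ω₂ / (1 + ω₂) with hb_def
  have ha0 : 0 ≤ a := div_nonneg h1 hA1.le
  have hb0 : 0 ≤ b := div_nonneg (by linarith) hA2.le
  have hb1 : b < 1 := (div_lt_one hA2).2 (by linarith)
  have hab : a < b := by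
    rw [ha_def, hb_def, div_lt_div_iff₀ hA1 hA2]; nlinarith
  have hga : ∀ t ∈ Set.Icc (0:ℝ) 1, 0 < 1 - t * a := by
    intro t ht
    have : t * a ≤ 1 * b := mul_le_mul ht.2 hab.le ha0 one_pos.le
    simpa using lt_of_le_of_lt this (by simpa using hb1)
  have hgb : ∀ t ∈ Set.Icc (0:ℝ) 1, 0 < 1 - t * b := by
    intro t ht
    have : t * b ≤ 1 * b := mul_le_mul_of_nonneg_right ht.2 hb0
    simpa using lt_of_le_of_lt this (by simpa using hb1)
  have hC1 : (0:ℝ) < (1 + ω₁) ^ (-(p : ℝ) / 2) := Real.rpow_pos_of_pos hA1 _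
  have hC2 : (0:ℝ) < (1 + ω₂) ^ (-(p : ℝ) / 2) := Real.rpow_pos_of_pos hA2 _
  have feq : ∀ t ∈ Set.Icc (0:ℝ) 1,
      ((1 + ω₂) ^ (-(p : ℝ) / 2) * (1 - t * ω₂ / (1 + ω₂)) ^ (-(n : ℝ) / 2)) /
      ((1 + ω₁) ^ (-(p : ℝ) / 2) * (1 - t * ω₁ / (1 + ω₁)) ^ (-(n : ℝ) / 2))
      = ((1 + ω₂) ^ (-(p : ℝ) / 2) / (1 + ω₁) ^ (-(p : ℝ) / 2)) *
        ((1 - t * a) / (1 - t * b)) ^ ((n : ℝ) / 2) := by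
    intro t ht
    have h1' := hga t ht
    have h2' := hgb t ht
    have e1 : 1 - t * ω₁ / (1 + ω₁) = 1 - t * a := by rw [ha_def, mul_div_assoc]
    have e2 : 1 - t * ω₂ / (1 + ω₂) = 1 - t * b := by rw [hb_def, mul_div_assoc]
    rw [e1, e2, show -(n:ℝ)/2 = -((n:ℝ)/2) by ring,
      Real.rpow_neg h1'.le, Real.rpow_neg h2'.le,
      Real.div_rpow h1'.le h2'.le]
    have hx1 : (1 - t * a) ^ ((n:ℝ)/2) ≠ 0 := (Real.rpow_pos_of_pos h1' _).ne'
    have hx2 : (1 - t * b) ^ ((n:ℝ)/2) ≠ 0 := (Real.rpow_pos_of_pos h2' _).ne'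
    field_simp
  intro s hs t ht hst
  simp only
  rw [feq s hs, feq t ht]
  have hexp : (0:ℝ) < (n:ℝ)/2 := by
    have : 0 < n := lt_of_le_of_lt (Nat.zero_le p) hpn
    positivity
  refine mul_lt_mul_of_pos_left ?_ (div_pos hC2 hC1)
  refine Real.rpow_lt_rpow (div_nonneg (hga s hs).le (hgb s hs).le) ?_ hexp
  rw [div_lt_div_iff₀ (hgb s hs) (hgb t ht)]
  nlinarith [mul_pos (sub_pos.2 hab) (sub_pos.2 hst)]
end
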